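/- arXiv:1104.1587 — 3 statements merged into one kernel-verified Lean document; each statement's English description precedes it below -/
import Mathlib

section
/- Let m ≥ 1 and N ≥ 2 be natural numbers, α, β, λ ∈ ℂ, A₁, A₂, B₁, B₂ ∈ M_m(ℂ), and let v : ℕ → ℂ satisfy PSD(N,α,β,λ). Let R ∈ ℂ^m with (α·A₁ − A₂)·R = 0 and (β·B₁ − B₂)·R = 0. Then the function H(i) := v(i)·R satisfies: H(i+1) − (2−λ)·H(i) + H(i−1) = 0 for all 0 < i < N, A₁·H(0) + N·A₂·(H(1) − H(0)) = 0, and B₁·H(N) + N·B₂·(H(N) − H(N−1)) = 0. -/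
open Matrix

/-- `h : ℕ → ℂ` satisfies the scalar discrete Sturm–Liouville problem PSD(N,α,β,λ). -/
def PSD (N : ℕ) (α β lam : ℂ) (h : ℕ → ℂ) : Prop :=
  (∀ i : ℕ, 0 < i → i < N → h (i + 1) - (2 - lam) * h i + h (i - 1) = 0) ∧
  h 0 + α * (N : ℂ) * (h 1 - h 0) = 0 ∧
  h N + β * (N : ℂ) * (h N - h (N - 1)) = 0

theorem psdv_boundary_coupled (m N : ℕ) (hm : 1 ≤ m) (hN : 2 ≤ N)
    (α β lam : ℂ) (A₁ A₂ B₁ B₂ : Matrix (Fin m) (Fin m) ℂ)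
    (v : ℕ → ℂ) (hv : PSD N α β lam v)
    (R : Fin m → ℂ)
    (hR1 : (α • A₁ - A₂).mulVec R = 0)
    (hR2 : (β • B₁ - B₂).mulVec R = 0)
    (H : ℕ → Fin m → ℂ) (hH : ∀ i, H i = v i • R) :
    (∀ i : ℕ, 0 < i → i < N → H (i + 1) - (2 - lam) • H i + H (i - 1) = 0) ∧
    A₁.mulVec (H 0) + (N : ℂ) • A₂.mulVec (H 1 - H 0) = 0 ∧
    B₁.mulVec (H N) + (N : ℂ) • B₂.mulVec (H N - H (N - 1)) = 0 := by
  obtain ⟨hrec, hb0, hbN⟩ := hv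
  have hA : A₂.mulVec R = α • A₁.mulVec R := by
    have h := hR1
    rwa [sub_mulVec, smul_mulVec, sub_eq_zero, eq_comm] at h
  have hB : B₂.mulVec R = β • B₁.mulVec R := by
    have h := hR2
    rwa [sub_mulVec, smul_mulVec, sub_eq_zero, eq_comm] at h
  refine ⟨?_, ?_, ?_⟩
  · intro i h1 h2
    simp only [hH, smul_smul]
    rw [← sub_smul, ← add_smul, hrec i h1 h2, zero_smul]
  · simp only [hH, ← sub_smul, mulVec_smul, hA, smul_smul, ← add_smul]
    convert zero_smul ℂ (A₁.mulVec R) using 2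
    linear_combination hb0
  · simp only [hH, ← sub_smul, mulVec_smul, hB, smul_smul, ← add_smul]
    convert zero_smul ℂ (B₁.mulVec R) using 2
    linear_combination hbN
end

section
/- Let m ≥ 1, k ≥ 1, and let N₀, M ∈ M_m(ℂ) with M invertible, N₀·M = M·N₀ and N₀^k = 0. Let d : ℕ → ℂ^m satisfy N₀·d(j+1) − M·d(j) + N₀·d(j−1) = 0 for all j ≥ 1. Then d(j) = 0 for all j ≥ k. Moreover, if in addition N₀·d(0) = 0, then d(j) = 0 for all j ≥ 1. -/
open Matrix

theorem nilpotent_difference_equation_trivial (m k : ℕ) (hm : 1 ≤ m) (hk : 1 ≤ k)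
    (N₀ M : Matrix (Fin m) (Fin m) ℂ)
    (hM : IsUnit M) (hcomm : N₀ * M = M * N₀) (hnil : N₀ ^ k = 0)
    (d : ℕ → Fin m → ℂ)
    (hd : ∀ j : ℕ, 1 ≤ j →
      N₀.mulVec (d (j + 1)) - M.mulVec (d j) + N₀.mulVec (d (j - 1)) = 0) :
    (∀ j : ℕ, k ≤ j → d j = 0) ∧
    (N₀.mulVec (d 0) = 0 → ∀ j : ℕ, 1 ≤ j → d j = 0) := by
  have hdet : IsUnit M.det := (Matrix.isUnit_iff_isUnit_det M).mp hM
  have hMl : M⁻¹ * M = 1 := Matrix.nonsing_inv_mul M hdet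
  have hMr : M * M⁻¹ = 1 := Matrix.mul_nonsing_inv M hdet
  set A := M⁻¹ * N₀ with hA
  have hcomm' : M⁻¹ * N₀ = N₀ * M⁻¹ := by
    calc M⁻¹ * N₀ = M⁻¹ * N₀ * (M * M⁻¹) := by rw [hMr, mul_one]
    _ = M⁻¹ * (N₀ * M) * M⁻¹ := by simp [mul_assoc]
    _ = M⁻¹ * (M * N₀) * M⁻¹ := by rw [hcomm]
    _ = N₀ * M⁻¹ := by rw [← mul_assoc, hMl, one_mul]
  have hApow : A ^ k = 0 := by
    have h2 : (M⁻¹ * N₀) ^ k = (M⁻¹) ^ k * N₀ ^ k := Commute.mul_pow hcomm' k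
    rw [hA, h2, hnil, mul_zero]
  have step : ∀ j : ℕ, 1 ≤ j → d j = A.mulVec (d (j+1)) + A.mulVec (d (j-1)) := by
    intro j hj
    have h := hd j hj
    have hMd : M.mulVec (d j) = N₀.mulVec (d (j+1)) + N₀.mulVec (d (j-1)) := by
      linear_combination -h
    calc d j = (M⁻¹ * M).mulVec (d j) := by rw [hMl, one_mulVec]
    _ = M⁻¹.mulVec (M.mulVec (d j)) := by rw [← mulVec_mulVec]
    _ = M⁻¹.mulVec (N₀.mulVec (d (j+1)) + N₀.mulVec (d (j-1))) := by rw [hMd]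
    _ = A.mulVec (d (j+1)) + A.mulVec (d (j-1)) := by
        rw [Matrix.mulVec_add, mulVec_mulVec, mulVec_mulVec]
  have key1 : ∀ i : ℕ, ∀ j : ℕ, i ≤ j → ∃ v, d j = (A ^ i).mulVec v := by
    intro i
    induction i with
    | zero => intro j _; exact ⟨d j, by simp⟩
    | succ i ih =>
      intro j hj
      have hj1 : 1 ≤ j := by omega
      obtain ⟨v1, hv1⟩ := ih (j+1) (by omega)
      obtain ⟨v2, hv2⟩ := ih (j-1) (by omega)
      refine ⟨v1 + v2, ?_⟩
      rw [step j hj1, hv1, hv2, pow_succ', Matrix.mulVec_add, mulVec_mulVec,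
        mulVec_mulVec, ← Matrix.mulVec_add]
  have part1 : ∀ j : ℕ, k ≤ j → d j = 0 := by
    intro j hj
    obtain ⟨v, hv⟩ := key1 k j hj
    rw [hv, hApow, Matrix.zero_mulVec]
  refine ⟨part1, ?_⟩
  intro hN0
  have hA0 : A.mulVec (d 0) = 0 := by
    rw [hA, ← mulVec_mulVec, hN0, Matrix.mulVec_zero]
  have key2 : ∀ i : ℕ, ∀ j : ℕ, 1 ≤ j → ∃ v, d j = (A ^ i).mulVec v := by
    intro i
    induction i with
    | zero => intro j _; exact ⟨d j, by simp⟩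
    | succ i ih =>
      intro j hj
      obtain ⟨v1, hv1⟩ := ih (j+1) (by omega)
      by_cases hj2 : 2 ≤ j
      · obtain ⟨v2, hv2⟩ := ih (j-1) (by omega)
        refine ⟨v1 + v2, ?_⟩
        rw [step j hj, hv1, hv2, pow_succ', Matrix.mulVec_add, mulVec_mulVec,
          mulVec_mulVec, ← Matrix.mulVec_add]
      · have hj1 : j = 1 := by omega
        subst hj1
        refine ⟨v1, ?_⟩
        rw [step 1 le_rfl, show (1:ℕ) - 1 = 0 from rfl, hA0, add_zero, hv1,
          pow_succ', mulVec_mulVec]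
  intro j hj
  obtain ⟨v, hv⟩ := key2 k j hj
  rw [hv, hApow, Matrix.zero_mulVec]
end

section
/- Let m ≥ 1, E, A, A₁, A₂, B₁, B₂ ∈ M_m(ℂ), γ ∈ ℂ such that γ·E + A is invertible; set Ê := (γE + A)⁻¹·E and Â := (γE + A)⁻¹·A. Let D ∈ M_m(ℂ) satisfy D·Ê = Ê·D and D·Ê·D = D. Let N ≥ 2 be a natural number, α, β ∈ ℂ, k > 0 a real number, and r := k·N. Let W := ker(α·A₁ − A₂) ∩ ker(β·B₁ − B₂) ⊆ ℂ^m. Let L be a finite index set and for each l ∈ L let: λ_l ∈ ℂ and v_l : ℕ → ℂ satisfy PSD(N,α,β,λ_l); Z₀l, Z₁l ∈ M_m(ℂ) satisfy Z₀l·Z₁l = Z₁l·Z₀l = Ê·D, Z₀l + Z₁l = 2·Ê·D − r²·λ_l·D·Â, (Ê·D)·Z₀l = Z₀l, (Ê·D)·Z₁l = Z₁l, Z₀l·W ⊆ W and Z₁l·W ⊆ W; and P_l, Q_l ∈ W with (Ê·D)·P_l = P_l and (Ê·D)·Q_l = Q_l. Define U(i,j) := Σ_{l∈L} (Z₀l^j·P_l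 + Z₁l^j·Q_l)·v_l(i) ∈ ℂ^m. Then: (a) for all i with 0 < i < N and all j ≥ 1, E·(U(i,j+1) − 2·U(i,j) + U(i,j−1)) = r²·A·(U(i+1,j) − 2·U(i,j) + U(i−1,j)); and (b) for all j ≥ 0, A₁·U(0,j) + N·A₂·(U(1,j) − U(0,j)) = 0 and B₁·U(N,j) + N·B₂·(U(N,j) − U(N−1,j)) = 0. -/
open Matrix

lemma mulVec_sum' {m : ℕ} {L : Type} [Fintype L] (M : Matrix (Fin m) (Fin m) ℂ)
    (f : L → Fin m → ℂ) : M.mulVec (∑ l, f l) = ∑ l, M.mulVec (f l) := by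
  ext i
  simp [Matrix.mulVec, dotProduct, Finset.mul_sum, Finset.sum_apply]
  rw [Finset.sum_comm]

lemma aux_quad {m : ℕ} (EhD K Z₀ Z₁ : Matrix (Fin m) (Fin m) ℂ)
    (hprod : Z₀ * Z₁ = EhD) (hprod' : Z₁ * Z₀ = EhD)
    (hsum : Z₀ + Z₁ = (2:ℂ) • EhD - K)
    (hproj : EhD * Z₀ = Z₀)
    (P : Fin m → ℂ) (hP : EhD.mulVec P = P) (n : ℕ) :
    (Z₀ ^ (n+2)).mulVec P - (2:ℂ) • (Z₀ ^ (n+1)).mulVec P + (Z₀ ^ n).mulVec P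
      = -(K.mulVec ((Z₀ ^ (n+1)).mulVec P)) := by
  have hZE : Z₀ * EhD = Z₀ := by
    rw [← hprod', ← mul_assoc, hprod, hproj]
  have hcomm : Commute K Z₀ := by
    have hK : K = (2:ℂ) • EhD - (Z₀ + Z₁) := by
      rw [hsum]; exact (sub_sub_cancel _ _).symm
    unfold Commute SemiconjBy
    rw [hK, sub_mul, mul_sub, smul_mul_assoc, mul_smul_comm, hproj, hZE,
      add_mul, mul_add, hprod, hprod']
  have hmid : Z₀ ^ (n+2) + Z₀ ^ n * EhD = (2:ℂ) • Z₀ ^ (n+1) - K * Z₀ ^ (n+1) := by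
    have h1 : Z₀ ^ (n+2) + Z₀ ^ n * EhD = Z₀ ^ n * ((Z₀ + Z₁) * Z₀) := by
      rw [← hprod']; noncomm_ring
    rw [h1, hsum, sub_mul, smul_mul_assoc, hproj, mul_sub, mul_smul_comm,
      ← mul_assoc, ← (hcomm.pow_right n).eq, mul_assoc, ← pow_succ]
  have happ := congrArg (fun M : Matrix (Fin m) (Fin m) ℂ => M.mulVec P) hmid
  simp only [Matrix.add_mulVec, Matrix.sub_mulVec, Matrix.smul_mulVec,
    ← Matrix.mulVec_mulVec] at happ
  rw [hP] at happ
  linear_combination (norm := module) happ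

theorem discrete_solution_wave_equation (m N : ℕ) (hm : 1 ≤ m) (hN : 2 ≤ N)
    (E A A₁ A₂ B₁ B₂ : Matrix (Fin m) (Fin m) ℂ) (γ : ℂ)
    (hγ : IsUnit (γ • E + A))
    (Ehat Ahat : Matrix (Fin m) (Fin m) ℂ)
    (hEhat : Ehat = (γ • E + A)⁻¹ * E) (hAhat : Ahat = (γ • E + A)⁻¹ * A)
    (D : Matrix (Fin m) (Fin m) ℂ)
    (hD1 : D * Ehat = Ehat * D) (hD2 : D * Ehat * D = D)
    (α β : ℂ) (k : ℝ) (hk : 0 < k) (r : ℝ) (hr : r = k * N)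
    (W : Set (Fin m → ℂ))
    (hW : W = {x | (α • A₁ - A₂).mulVec x = 0 ∧ (β • B₁ - B₂).mulVec x = 0})
    (L : Type) [Fintype L]
    (lam : L → ℂ) (v : L → ℕ → ℂ) (hv : ∀ l, PSD N α β (lam l) (v l))
    (Z₀ Z₁ : L → Matrix (Fin m) (Fin m) ℂ)
    (hprod : ∀ l, Z₀ l * Z₁ l = Ehat * D) (hprod' : ∀ l, Z₁ l * Z₀ l = Ehat * D)
    (hsum : ∀ l, Z₀ l + Z₁ l =
      (2 : ℂ) • (Ehat * D) - (((r : ℂ)) ^ 2 * lam l) • (D * Ahat))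
    (hproj0 : ∀ l, (Ehat * D) * Z₀ l = Z₀ l)
    (hproj1 : ∀ l, (Ehat * D) * Z₁ l = Z₁ l)
    (hZ₀W : ∀ l, ∀ x ∈ W, (Z₀ l).mulVec x ∈ W)
    (hZ₁W : ∀ l, ∀ x ∈ W, (Z₁ l).mulVec x ∈ W)
    (P Q : L → Fin m → ℂ) (hPW : ∀ l, P l ∈ W) (hQW : ∀ l, Q l ∈ W)
    (hPproj : ∀ l, (Ehat * D).mulVec (P l) = P l)
    (hQproj : ∀ l, (Ehat * D).mulVec (Q l) = Q l)
    (U : ℕ → ℕ → Fin m → ℂ)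
    (hU : ∀ i j, U i j =
      ∑ l, v l i • ((Z₀ l ^ j).mulVec (P l) + (Z₁ l ^ j).mulVec (Q l))) :
    (∀ i j : ℕ, 0 < i → i < N → 1 ≤ j →
      E.mulVec (U i (j + 1) - (2 : ℂ) • U i j + U i (j - 1)) =
        ((r : ℂ) ^ 2) • A.mulVec (U (i + 1) j - (2 : ℂ) • U i j + U (i - 1) j)) ∧
    (∀ j : ℕ,
      A₁.mulVec (U 0 j) + (N : ℂ) • A₂.mulVec (U 1 j - U 0 j) = 0 ∧
      B₁.mulVec (U N j) + (N : ℂ) • B₂.mulVec (U N j - U (N - 1) j) = 0) := by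
  -- basic algebra around Ehat, Ahat
  have hdet : IsUnit (γ • E + A).det := (Matrix.isUnit_iff_isUnit_det _).mp hγ
  have hE : (γ • E + A) * Ehat = E := by
    rw [hEhat, Matrix.mul_nonsing_inv_cancel_left _ _ hdet]
  have hA : (γ • E + A) * Ahat = A := by
    rw [hAhat, Matrix.mul_nonsing_inv_cancel_left _ _ hdet]
  have hone : γ • Ehat + Ahat = 1 := by
    rw [hEhat, hAhat, ← Matrix.mul_smul, ← Matrix.mul_add,
      Matrix.nonsing_inv_mul _ hdet]
  have hAhat' : Ahat = 1 - γ • Ehat := by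
    rw [← hone]; abel
  have hDA : D * Ahat = Ahat * D := by
    rw [hAhat', mul_sub, sub_mul, mul_one, one_mul, Matrix.mul_smul,
      Matrix.smul_mul, hD1]
  have hEAcomm : Ehat * Ahat = Ahat * Ehat := by
    rw [hAhat', mul_sub, sub_mul, mul_one, one_mul, Matrix.mul_smul,
      Matrix.smul_mul]
  have hEDA : E * (D * Ahat) = A * (Ehat * D) := by
    have h1 : Ehat * (D * Ahat) = Ahat * (Ehat * D) := by
      rw [hDA, ← mul_assoc Ehat Ahat D, hEAcomm, mul_assoc]
    calc E * (D * Ahat) = (γ • E + A) * Ehat * (D * Ahat) := by rw [hE]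
      _ = (γ • E + A) * (Ehat * (D * Ahat)) := by rw [mul_assoc]
      _ = (γ • E + A) * (Ahat * (Ehat * D)) := by rw [h1]
      _ = (γ • E + A) * Ahat * (Ehat * D) := by rw [← mul_assoc]
      _ = A * (Ehat * D) := by rw [hA]
  have key1 : ∀ x : Fin m → ℂ, (Ehat * D).mulVec x = x →
      E.mulVec ((D * Ahat).mulVec x) = A.mulVec x := by
    intro x hx
    rw [Matrix.mulVec_mulVec, hEDA, ← Matrix.mulVec_mulVec, hx]
  -- fixed points of Ehat * D
  have hfix0 : ∀ l j, (Ehat * D).mulVec ((Z₀ l ^ j).mulVec (P l))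
      = (Z₀ l ^ j).mulVec (P l) := by
    intro l j
    cases j with
    | zero => simpa using hPproj l
    | succ n =>
        rw [Matrix.mulVec_mulVec, pow_succ', ← mul_assoc, hproj0 l, ← pow_succ']
  have hfix1 : ∀ l j, (Ehat * D).mulVec ((Z₁ l ^ j).mulVec (Q l))
      = (Z₁ l ^ j).mulVec (Q l) := by
    intro l j
    cases j with
    | zero => simpa using hQproj l
    | succ n =>
        rw [Matrix.mulVec_mulVec, pow_succ', ← mul_assoc, hproj1 l, ← pow_succ']
  -- W membership
  have hWP : ∀ l j, (Z₀ l ^ j).mulVec (P l) ∈ W := by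
    intro l j
    induction j with
    | zero => simpa using hPW l
    | succ n ih =>
        rw [pow_succ', ← Matrix.mulVec_mulVec]
        exact hZ₀W l _ ih
  have hWQ : ∀ l j, (Z₁ l ^ j).mulVec (Q l) ∈ W := by
    intro l j
    induction j with
    | zero => simpa using hQW l
    | succ n ih =>
        rw [pow_succ', ← Matrix.mulVec_mulVec]
        exact hZ₁W l _ ih
  have hWw : ∀ l j, ((Z₀ l ^ j).mulVec (P l) + (Z₁ l ^ j).mulVec (Q l)) ∈ W := by
    intro l j
    have h1 := hWP l j
    have h2 := hWQ l j
    rw [hW] at h1 h2 ⊢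
    exact ⟨by rw [Matrix.mulVec_add, h1.1, h2.1, add_zero],
           by rw [Matrix.mulVec_add, h1.2, h2.2, add_zero]⟩
  -- consequences of W membership
  have hWa : ∀ x ∈ W, A₂.mulVec x = α • A₁.mulVec x := by
    intro x hx
    rw [hW] at hx
    have := hx.1
    rw [Matrix.sub_mulVec, Matrix.smul_mulVec, sub_eq_zero] at this
    exact this.symm
  have hWb : ∀ x ∈ W, B₂.mulVec x = β • B₁.mulVec x := by
    intro x hx
    rw [hW] at hx
    have := hx.2
    rw [Matrix.sub_mulVec, Matrix.smul_mulVec, sub_eq_zero] at this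
    exact this.symm
  constructor
  · -- part (a)
    intro i j hi hiN hj
    obtain ⟨i0, rfl⟩ := Nat.exists_eq_succ_of_ne_zero hi.ne'
    obtain ⟨n, rfl⟩ := Nat.exists_eq_succ_of_ne_zero (Nat.one_le_iff_ne_zero.mp hj)
    simp only [Nat.succ_sub_one, Nat.succ_eq_add_one]
    have hkey : ∀ l : L,
        E.mulVec ((Z₀ l ^ (n+2)).mulVec (P l) + (Z₁ l ^ (n+2)).mulVec (Q l))
        - (2:ℂ) • E.mulVec ((Z₀ l ^ (n+1)).mulVec (P l) + (Z₁ l ^ (n+1)).mulVec (Q l))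
        + E.mulVec ((Z₀ l ^ n).mulVec (P l) + (Z₁ l ^ n).mulVec (Q l))
        = -((((r:ℂ)^2 * lam l)) •
            A.mulVec ((Z₀ l ^ (n+1)).mulVec (P l) + (Z₁ l ^ (n+1)).mulVec (Q l))) := by
      intro l
      have hq0 := aux_quad (Ehat * D) ((((r:ℂ)^2 * lam l)) • (D * Ahat)) (Z₀ l) (Z₁ l)
        (hprod l) (hprod' l) (hsum l) (hproj0 l) (P l) (hPproj l) n
      have hq1 := aux_quad (Ehat * D) ((((r:ℂ)^2 * lam l)) • (D * Ahat)) (Z₁ l) (Z₀ l)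
        (hprod' l) (hprod l) (by rw [add_comm]; exact hsum l) (hproj1 l) (Q l) (hQproj l) n
      have hvec0 : E.mulVec (((((r:ℂ)^2 * lam l)) • (D * Ahat)).mulVec
          ((Z₀ l ^ (n+1)).mulVec (P l)))
          = (((r:ℂ)^2 * lam l)) • A.mulVec ((Z₀ l ^ (n+1)).mulVec (P l)) := by
        rw [Matrix.smul_mulVec, Matrix.mulVec_smul, key1 _ (hfix0 l (n+1))]
      have hvec1 : E.mulVec (((((r:ℂ)^2 * lam l)) • (D * Ahat)).mulVec
          ((Z₁ l ^ (n+1)).mulVec (Q l)))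
          = (((r:ℂ)^2 * lam l)) • A.mulVec ((Z₁ l ^ (n+1)).mulVec (Q l)) := by
        rw [Matrix.smul_mulVec, Matrix.mulVec_smul, key1 _ (hfix1 l (n+1))]
      have e0 := congrArg E.mulVec hq0
      have e1 := congrArg E.mulVec hq1
      simp only [Matrix.mulVec_add, Matrix.mulVec_sub, Matrix.mulVec_smul,
        Matrix.mulVec_neg] at e0 e1 ⊢
      rw [hvec0] at e0
      rw [hvec1] at e1
      linear_combination (norm := module) e0 + e1
    have hvrec : ∀ l : L, v l (i0+1+1) - 2 * v l (i0+1) + v l i0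
        = -(lam l * v l (i0+1)) := by
      intro l
      have h := (hv l).1 (i0+1) (Nat.succ_pos _) hiN
      simp only [Nat.add_sub_cancel] at h
      linear_combination h
    simp only [hU]
    simp only [Finset.smul_sum, ← Finset.sum_sub_distrib, ← Finset.sum_add_distrib,
      mulVec_sum']
    refine Finset.sum_congr rfl fun l _ => ?_
    have hkl := hkey l
    have hvl := hvrec l
    simp only [Matrix.mulVec_add, Matrix.mulVec_sub, Matrix.mulVec_smul] at hkl ⊢
    have hn2 : i0 + 1 + 1 + 1 = i0 + 2 + 1 := rfl
    have hm2 : n + 1 + 1 = n + 2 := rfl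
    rw [hm2] at *
    linear_combination (norm := module) (v l (i0+1)) • hkl
      - ((r:ℂ)^2) • congrArg (fun t : ℂ => t •
          (A.mulVec ((Z₀ l ^ (n+1)).mulVec (P l)) + A.mulVec ((Z₁ l ^ (n+1)).mulVec (Q l)))) hvl
  · -- part (b)
    intro j
    constructor
    · rw [hU, hU]
      simp only [Finset.smul_sum, ← Finset.sum_sub_distrib, ← Finset.sum_add_distrib,
        mulVec_sum']
      refine Finset.sum_eq_zero fun l _ => ?_
      have hA2 := hWa _ (hWw l j)
      have hbc : v l 0 + α * (N:ℂ) * (v l 1 - v l 0) = 0 := (hv l).2.1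
      simp only [Matrix.mulVec_smul, Matrix.mulVec_sub, hA2]
      have : v l 0 • (α • A₁.mulVec ((Z₀ l ^ j).mulVec (P l) + (Z₁ l ^ j).mulVec (Q l)))
          = v l 0 • (α • A₁.mulVec ((Z₀ l ^ j).mulVec (P l) + (Z₁ l ^ j).mulVec (Q l))) := rfl
      calc v l 0 • A₁.mulVec ((Z₀ l ^ j).mulVec (P l) + (Z₁ l ^ j).mulVec (Q l))
            + (N:ℂ) • (v l 1 • (α • A₁.mulVec ((Z₀ l ^ j).mulVec (P l) + (Z₁ l ^ j).mulVec (Q l)))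
              - v l 0 • (α • A₁.mulVec ((Z₀ l ^ j).mulVec (P l) + (Z₁ l ^ j).mulVec (Q l))))
          = (v l 0 + α * (N:ℂ) * (v l 1 - v l 0)) •
              A₁.mulVec ((Z₀ l ^ j).mulVec (P l) + (Z₁ l ^ j).mulVec (Q l)) := by module
        _ = 0 := by rw [hbc, zero_smul]
    · rw [hU, hU]
      simp only [Finset.smul_sum, ← Finset.sum_sub_distrib, ← Finset.sum_add_distrib,
        mulVec_sum']
      refine Finset.sum_eq_zero fun l _ => ?_
      have hB2 := hWb _ (hWw l j)
      have hbc : v l N + β * (N:ℂ) * (v l N - v l (N-1)) = 0 := (hv l).2.2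
      simp only [Matrix.mulVec_smul, Matrix.mulVec_sub, hB2]
      calc v l N • B₁.mulVec ((Z₀ l ^ j).mulVec (P l) + (Z₁ l ^ j).mulVec (Q l))
            + (N:ℂ) • (v l N • (β • B₁.mulVec ((Z₀ l ^ j).mulVec (P l) + (Z₁ l ^ j).mulVec (Q l)))
              - v l (N-1) • (β • B₁.mulVec ((Z₀ l ^ j).mulVec (P l) + (Z₁ l ^ j).mulVec (Q l))))
          = (v l N + β * (N:ℂ) * (v l N - v l (N-1))) •
              B₁.mulVec ((Z₀ l ^ j).mulVec (P l) + (Z₁ l ^ j).mulVec (Q l)) := by module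
        _ = 0 := by rw [hbc, zero_smul]
end
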